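/- arXiv:0909.3468 — 10 statements merged into one kernel-verified Lean document; each statement's English description precedes it below -/
import Mathlib

section
/- Let L be a meet-semilattice with a greatest element, F a frame, and f : L → F a map preserving binary meets and the top element. Suppose f generates F, in the sense that V = ⋁{f(x) | x ∈ L, f(x) ≤ V} for every V ∈ F. Define x ◁ U if and only if f(x) ≤ ⋁_{u∈U} f(u). Then ◁ is a covering relation on L, and the map g : F(L,◁) → F given by g(U) = ⋁_{u∈U} f(u) is an order isomorphism from the poset F(L,◁) of ◁-closed lower sets (ordered by inclusion) onto F. -/
/-- A covering relation on a meet-semilattice `L`. -/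
def IsCoveringRel {L : Type*} [SemilatticeInf L] (R : L → Set L → Prop) : Prop :=
  (∀ x (U : Set L), x ∈ U → R x U) ∧
  (∀ x (U V : Set L), R x U → (∀ y ∈ U, R y V) → R x V) ∧
  (∀ x y (U : Set L), R x U → R (x ⊓ y) U) ∧
  (∀ x (U V : Set L), x ∈ U → x ∈ V → R x (Set.image2 (· ⊓ ·) U V))

/-- `U` is an `R`-closed lower set. -/
def ClosedLower {L : Type*} [SemilatticeInf L] (R : L → Set L → Prop) (U : Set L) : Prop :=
  IsLowerSet U ∧ ∀ x, R x U → x ∈ U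

/-- If `f : L → F` generates the frame `F`, then `x ◁ U ↔ f x ≤ ⋁ f(U)` is a covering relation
on `L` and `U ↦ ⋁_{u ∈ U} f u` is an order isomorphism `F(L,◁) ≅ F`. -/
theorem generated_frame_iso {L : Type*} [SemilatticeInf L] [OrderTop L]
    {F : Type*} [Order.Frame F] (f : L → F)
    (hmeet : ∀ x y, f (x ⊓ y) = f x ⊓ f y) (htop : f ⊤ = ⊤)
    (hgen : ∀ V : F, V = ⨆ (x : L) (_ : f x ≤ V), f x) :
    IsCoveringRel (fun x U => f x ≤ ⨆ u ∈ U, f u) ∧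
    ∃ e : {U : Set L // ClosedLower (fun x U => f x ≤ ⨆ u ∈ U, f u) U} ≃o F,
      ∀ U, e U = ⨆ u ∈ U.1, f u := by
  have hmono : Monotone f := by
    intro x y h
    have : f x = f x ⊓ f y := by rw [← hmeet, inf_eq_left.mpr h]
    rw [this]; exact inf_le_right
  constructor
  · refine ⟨fun x U hx => le_biSup f hx, ?_, ?_, ?_⟩
    · intro x U V hU hV
      exact hU.trans (iSup₂_le fun y hy => hV y hy)
    · intro x y U h
      calc f (x ⊓ y) ≤ f x := hmono inf_le_left
        _ ≤ _ := h
    · intro x U V hU hV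
      have : x ⊓ x ∈ Set.image2 (· ⊓ ·) U V := Set.mem_image2_of_mem hU hV
      calc f x = f (x ⊓ x) := by rw [inf_idem]
        _ ≤ _ := le_biSup f this
  · have hcl : ∀ V : F, ClosedLower (fun x U => f x ≤ ⨆ u ∈ U, f u) {x | f x ≤ V} := by
      intro V
      refine ⟨fun a b hba ha => le_trans (hmono hba) ha, fun x hx => ?_⟩
      refine hx.trans (iSup₂_le fun u hu => hu)
    refine ⟨{ toFun := fun U => ⨆ u ∈ U.1, f u
              invFun := fun V => ⟨{x | f x ≤ V}, hcl V⟩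
              left_inv := ?_
              right_inv := ?_
              map_rel_iff' := ?_ }, fun U => rfl⟩
    · intro U
      ext x
      simp only [Set.mem_setOf_eq]
      exact ⟨fun h => U.2.2 x h, fun hx => le_biSup f hx⟩
    · intro V
      simp only
      conv_rhs => rw [hgen V]
      exact le_antisymm (iSup₂_le fun u hu => le_iSup₂ (f := fun x (_ : f x ≤ V) => f x) u hu)
        (iSup₂_le fun u hu => le_iSup₂ (f := fun x (_ : x ∈ {x | f x ≤ V}) => f x) u hu)
    · intro U V
      simp only [Equiv.coe_fn_mk]
      constructor
      · intro h x hx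
        exact V.2.2 x ((le_biSup f hx).trans h)
      · intro h
        exact iSup₂_le fun u hu => le_biSup f (h hu)
end

section
/- Let I be a partially ordered set, and for each i ∈ I let B i be a complete Boolean algebra. For each pair i ≤ j in I let e_{ij} : B i → B j be an injective map preserving arbitrary suprema and arbitrary infima (hence order, top, bottom, and complements), such that e_{ii} = id and e_{jk} ∘ e_{ij} = e_{ik} whenever i ≤ j ≤ k. Let Y be the set of families f = (f i)_{i∈I} with f i ∈ B i for all i and e_{ij}(f i) ≤ f j whenever i ≤ j, ordered pointwise. Then: (1) Y is a complete lattice whose arbitrary suprema and infima are computed pointwise; (2) Y is a frame, i.e. x ⊓ ⋁_k y_k = ⋁_k (x ⊓ y_k) for every x ∈ Y and every family (y_k) in Y, so Y is a complete Heyting algebra; (3) the Heyting implication of Y is given by (g ⇨ h)(i) = ⋁ { x ∈ B i | for all j ≥ i, e_{ij}(x) ⊓ g(j) ≤ h(j) }. -/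
/-- Membership in the set `Y` of compatible families: `f i ∈ B i` with
`e_{ij}(f i) ≤ f j` whenever `i ≤ j`. -/
def CompatFam {I : Type*} [Preorder I] {B : I → Type*} [∀ i, Preorder (B i)]
    (e : ∀ i j, i ≤ j → B i → B j) (f : ∀ i, B i) : Prop :=
  ∀ i j (h : i ≤ j), e i j h (f i) ≤ f j

/-- Given a monotone system of complete Boolean algebras `B i` along injective maps `e_{ij}`
preserving arbitrary suprema and infima, the set `Y` of compatible families, ordered
pointwise, is a complete lattice with pointwise suprema and infima, it is a frame
(finite meets distribute over arbitrary joins), and its Heyting implication is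
`(g ⇨ h)(i) = ⋁ {x ∈ B i | ∀ j ≥ i, e_{ij}(x) ⊓ g j ≤ h j}`. -/
theorem monotoneFamilies_completeHeyting {I : Type*} [PartialOrder I] (B : I → Type*)
    [∀ i, CompleteBooleanAlgebra (B i)]
    (e : ∀ i j, i ≤ j → B i → B j)
    (einj : ∀ i j (h : i ≤ j), Function.Injective (e i j h))
    (esSup : ∀ i j (h : i ≤ j) (S : Set (B i)), e i j h (sSup S) = sSup (e i j h '' S))
    (esInf : ∀ i j (h : i ≤ j) (S : Set (B i)), e i j h (sInf S) = sInf (e i j h '' S))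
    (eid : ∀ i (x : B i), e i i le_rfl x = x)
    (ecomp : ∀ i j k (hij : i ≤ j) (hjk : j ≤ k) (x : B i),
        e j k hjk (e i j hij x) = e i k (hij.trans hjk) x) :
    -- (1) Y is a complete lattice with pointwise suprema and infima
    (∀ S : Set {f : ∀ i, B i // CompatFam e f},
        CompatFam e (fun i => ⨆ f ∈ S, f.1 i) ∧
        CompatFam e (fun i => ⨅ f ∈ S, f.1 i) ∧
        (∀ g ∈ S, ∀ i, g.1 i ≤ ⨆ f ∈ S, f.1 i) ∧
        (∀ u : ∀ i, B i, CompatFam e u → (∀ g ∈ S, ∀ i, g.1 i ≤ u i) →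
            ∀ i, (⨆ f ∈ S, f.1 i) ≤ u i) ∧
        (∀ g ∈ S, ∀ i, (⨅ f ∈ S, f.1 i) ≤ g.1 i) ∧
        (∀ u : ∀ i, B i, CompatFam e u → (∀ g ∈ S, ∀ i, u i ≤ g.1 i) →
            ∀ i, u i ≤ ⨅ f ∈ S, f.1 i)) ∧
    -- (2) Y is a frame: finite meets distribute over arbitrary joins (pointwise)
    (∀ x : ∀ i, B i, CompatFam e x → ∀ S : Set {f : ∀ i, B i // CompatFam e f}, ∀ i,
        x i ⊓ (⨆ f ∈ S, f.1 i) = ⨆ f ∈ S, x i ⊓ f.1 i) ∧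
    -- (3) the Heyting implication of Y is given by the stated formula:
    -- it is an element of Y and satisfies the defining adjunction of the implication
    (∀ g h : {f : ∀ i, B i // CompatFam e f},
        CompatFam e (fun i => sSup {x : B i | ∀ j (hij : i ≤ j), e i j hij x ⊓ g.1 j ≤ h.1 j}) ∧
        (∀ x : ∀ i, B i, CompatFam e x →
          ((∀ i, x i ≤ sSup {y : B i | ∀ j (hij : i ≤ j), e i j hij y ⊓ g.1 j ≤ h.1 j}) ↔
            ∀ i, x i ⊓ g.1 i ≤ h.1 i))) := by
  -- monotonicity of the maps `e`
  have emono : ∀ i j (h : i ≤ j), Monotone (e i j h) := by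
    intro i j h a b hab
    have h1 : (sSup {a, b} : B i) = b := by
      rw [sSup_pair, sup_eq_right.mpr hab]
    have h2 := esSup i j h {a, b}
    rw [h1, Set.image_pair, sSup_pair] at h2
    rw [h2]; exact le_sup_left
  refine ⟨?_, ?_, ?_⟩
  · intro S
    refine ⟨?_, ?_, ?_, ?_, ?_, ?_⟩
    · intro i j hij
      show e i j hij (⨆ f ∈ S, f.1 i) ≤ ⨆ f ∈ S, f.1 j
      have : (⨆ f ∈ S, f.1 i) = sSup ((fun f : {f : ∀ i, B i // CompatFam e f} => f.1 i) '' S) := by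
        rw [sSup_image]
      rw [this, esSup]
      apply sSup_le
      rintro _ ⟨_, ⟨f, hf, rfl⟩, rfl⟩
      exact le_trans (f.2 i j hij) (le_biSup (fun f : {f : ∀ i, B i // CompatFam e f} => f.1 j) hf)
    · intro i j hij
      show e i j hij (⨅ f ∈ S, f.1 i) ≤ ⨅ f ∈ S, f.1 j
      have : (⨅ f ∈ S, f.1 i) = sInf ((fun f : {f : ∀ i, B i // CompatFam e f} => f.1 i) '' S) := by
        rw [sInf_image]
      rw [this, esInf]
      apply le_iInf₂
      intro f hf
      exact le_trans (sInf_le ⟨f.1 i, ⟨f, hf, rfl⟩, rfl⟩) (f.2 i j hij)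
    · intro g hg i
      exact le_biSup (fun f : {f : ∀ i, B i // CompatFam e f} => f.1 i) hg
    · intro u _ hu i
      exact iSup₂_le fun g hg => hu g hg i
    · intro g hg i
      exact biInf_le (fun f : {f : ∀ i, B i // CompatFam e f} => f.1 i) hg
    · intro u _ hu i
      exact le_iInf₂ fun g hg => hu g hg i
  · intro x _ S i
    rw [inf_iSup_eq]
    exact iSup_congr fun f => inf_iSup_eq _ _
  · intro g h
    constructor
    · intro i j hij
      rw [esSup]
      apply sSup_le
      rintro _ ⟨y, hy, rfl⟩
      apply le_sSup
      intro k hjk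
      rw [ecomp i j k hij hjk y]
      exact hy k (hij.trans hjk)
    · intro x hx
      constructor
      · intro hle i
        calc x i ⊓ g.1 i ≤ sSup {y : B i | ∀ j (hij : i ≤ j), e i j hij y ⊓ g.1 j ≤ h.1 j} ⊓ g.1 i :=
              inf_le_inf_right _ (hle i)
          _ = ⨆ y ∈ {y : B i | ∀ j (hij : i ≤ j), e i j hij y ⊓ g.1 j ≤ h.1 j}, y ⊓ g.1 i := by
              rw [sSup_eq_iSup, iSup_inf_eq]
              exact iSup_congr fun y => iSup_inf_eq _ _
          _ ≤ h.1 i := by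
              apply iSup₂_le
              intro y hy
              have := hy i le_rfl
              rwa [eid] at this
      · intro hmeet i
        apply le_sSup
        intro j hij
        calc e i j hij (x i) ⊓ g.1 j ≤ x j ⊓ g.1 j := inf_le_inf_right _ (hx i j hij)
          _ ≤ h.1 j := hmeet j
end

section
/- Let I be a preordered set, let α be a partially ordered set with a least element ⊥, and let B : I → Set α be a family of subsets of α such that B i ⊆ B j whenever i ≤ j and ⊥ ∈ B i for all i. Let Y be the set of monotone functions f : I → α with f i ∈ B i for all i, ordered pointwise. For x ∈ ⋃_i B i define D(x) : I → α by D(x)(i) = x if x ∈ B i, and D(x)(i) = ⊥ otherwise. Then D(x) ∈ Y for every x ∈ ⋃_i B i; the map x ↦ D(x) is injective on ⋃_i B i; and it reflects the order: if D(x)(i) ≤ D(y)(i) for all i ∈ I, then x ≤ y. -/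
open Classical in
/-- The canonical map sending `x` to the monotone family `i ↦ x` if `x ∈ B i`, `⊥` otherwise. -/
noncomputable def canonicalInjection {I α : Type*} [PartialOrder α] [OrderBot α]
    (B : I → Set α) (x : α) (i : I) : α :=
  if x ∈ B i then x else ⊥

/-- For a monotone family of subsets `B i` of a poset `α` with least element, all containing `⊥`,
the canonical map `D` sends each `x ∈ ⋃ i, B i` to a monotone selection, is injective,
and reflects the order. -/
theorem canonicalInjection_injective_orderReflecting {I α : Type*} [Preorder I]
    [PartialOrder α] [OrderBot α] (B : I → Set α)
    (hmono : ∀ i j : I, i ≤ j → B i ⊆ B j) (hbot : ∀ i, (⊥ : α) ∈ B i) :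
    (∀ x ∈ ⋃ i, B i, Monotone (canonicalInjection B x) ∧
        ∀ i, canonicalInjection B x i ∈ B i) ∧
    (∀ x ∈ ⋃ i, B i, ∀ y ∈ ⋃ i, B i,
        canonicalInjection B x = canonicalInjection B y → x = y) ∧
    (∀ x ∈ ⋃ i, B i, ∀ y ∈ ⋃ i, B i,
        (∀ i, canonicalInjection B x i ≤ canonicalInjection B y i) → x ≤ y) := by
  have hle : ∀ x y : α, ∀ i, x ∈ B i →
      (∀ j, canonicalInjection B x j ≤ canonicalInjection B y j) → x ≤ y ∨ x = ⊥ := by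
    intro x y i hxi h
    have := h i
    unfold canonicalInjection at this
    rw [if_pos hxi] at this
    by_cases hy : y ∈ B i
    · rw [if_pos hy] at this; exact Or.inl this
    · rw [if_neg hy] at this; exact Or.inr (le_bot_iff.mp this)
  refine ⟨?_, ?_, ?_⟩
  · rintro x ⟨_, ⟨i, rfl⟩, hxi⟩
    constructor
    · intro j k hjk
      unfold canonicalInjection
      by_cases hj : x ∈ B j
      · rw [if_pos hj, if_pos (hmono j k hjk hj)]
      · rw [if_neg hj]; exact bot_le
    · intro j
      unfold canonicalInjection
      by_cases hj : x ∈ B j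
      · rwa [if_pos hj]
      · rw [if_neg hj]; exact hbot j
  · rintro x ⟨_, ⟨i, rfl⟩, hxi⟩ y ⟨_, ⟨j, rfl⟩, hyj⟩ heq
    have h1 := hle x y i hxi (fun k => (heq ▸ le_refl _))
    have h2 := hle y x j hyj (fun k => (heq ▸ le_refl _))
    rcases h1 with h | h
    · rcases h2 with h' | h'
      · exact le_antisymm h h'
      · subst h'; exact le_bot_iff.mp h
    · rcases h2 with h' | h'
      · subst h; exact (le_bot_iff.mp h').symm
      · rw [h, h']
  · rintro x ⟨_, ⟨i, rfl⟩, hxi⟩ y ⟨_, ⟨j, rfl⟩, hyj⟩ h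
    rcases hle x y i hxi h with h' | h'
    · exact h'
    · rw [h']; exact bot_le
end

section
/- Let A be a commutative unital C*-algebra and let a, b ∈ A be self-adjoint. If a ≤ a·b, then there exists a natural number n such that a⁺ ≤ n • b⁺, where a⁺ and b⁺ denote positive parts. In particular, any n ≥ ‖a‖ works. -/
open scoped ComplexOrder

private lemma aux_complex_cancel {p t : ℂ} (hp : 0 < p) (h : 0 ≤ p * t) : 0 ≤ t := by
  rw [Complex.lt_def] at hp
  rw [Complex.le_def] at h ⊢
  obtain ⟨hp1, hp2⟩ := hp
  simp only [Complex.zero_re, Complex.zero_im, Complex.mul_re, Complex.mul_im, ← hp2,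
    zero_mul, mul_zero, sub_zero, add_zero] at h ⊢
  refine ⟨le_of_mul_le_mul_left (by simpa using h.1) hp1, ?_⟩
  exact ((mul_eq_zero.mp h.2.symm).resolve_left hp1.ne').symm

private lemma aux_main {A : Type*} [CommCStarAlgebra A]
    [PartialOrder A] [StarOrderedRing A]
    (a b : A) (ha : IsSelfAdjoint a) (hb : IsSelfAdjoint b) (h : a ≤ a * b)
    (n : ℕ) (hn : ‖a‖ ≤ (n : ℝ)) : a⁺ ≤ n • b⁺ := by
  rcases subsingleton_or_nontrivial A with hA | hA
  · exact le_of_eq (Subsingleton.elim _ _)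
  rw [← sub_nonneg]
  have hsa : IsSelfAdjoint (n • b⁺ - a⁺) :=
    ((nsmul_nonneg (CFC.posPart_nonneg b) n).isSelfAdjoint).sub
      (CFC.posPart_nonneg a).isSelfAdjoint
  rw [StarOrderedRing.nonneg_iff_spectrum_nonneg (R := ℂ) _ hsa.isStarNormal]
  intro z hz
  obtain ⟨φ, hφ⟩ := WeakDual.CharacterSpace.mem_spectrum_iff_exists.mp hz
  -- basic facts
  have hnonneg : ∀ c : A, 0 ≤ c → 0 ≤ φ c := fun c hc ↦
    spectrum_nonneg_of_nonneg hc (AlgHom.apply_mem_spectrum φ c)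
  have hp : 0 ≤ φ a⁺ := hnonneg _ (CFC.posPart_nonneg a)
  have hq : 0 ≤ φ a⁻ := hnonneg _ (CFC.negPart_nonneg a)
  have hpb : 0 ≤ φ b⁺ := hnonneg _ (CFC.posPart_nonneg b)
  have hqb : 0 ≤ φ b⁻ := hnonneg _ (CFC.negPart_nonneg b)
  have hpq : φ a⁺ * φ a⁻ = 0 := by
    rw [← map_mul, CFC.posPart_mul_negPart a, map_zero]
  have hsa' : φ a⁺ - φ a⁻ = φ a := by
    rw [← map_sub, CFC.posPart_sub_negPart a ha]
  have hsb' : φ b⁺ - φ b⁻ = φ b := by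
    rw [← map_sub, CFC.posPart_sub_negPart b hb]
  have key : φ a⁺ ≤ (n : ℂ) * φ b⁺ := by
    rcases hp.lt_or_eq with hlt | heq
    · -- positive case
      have hq0 : φ a⁻ = 0 := by
        rcases mul_eq_zero.mp hpq with h' | h'
        · exact absurd h' hlt.ne'
        · exact h'
      have hpa : φ a = φ a⁺ := by rw [← hsa', hq0, sub_zero]
      have hab : 0 ≤ φ a * (φ b - 1) := by
        have := hnonneg _ (sub_nonneg.mpr h)
        rw [map_sub, map_mul] at this
        calc (0 : ℂ) ≤ φ a * φ b - φ a := this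
          _ = φ a * (φ b - 1) := by ring
      have hb1 : (1 : ℂ) ≤ φ b :=
        sub_nonneg.mp (aux_complex_cancel (hpa ▸ hlt) hab)
      have hb1' : (1 : ℂ) ≤ φ b⁺ := by
        refine hb1.trans ?_
        rw [← hsb']
        exact sub_le_self _ hqb
      have hna : φ a⁺ ≤ (n : ℂ) := by
        have hmem : φ a ∈ spectrum ℂ a := AlgHom.apply_mem_spectrum φ a
        have hnorm : ‖φ a‖ ≤ ‖a‖ := spectrum.norm_le_norm_of_mem hmem
        have hre : (φ a⁺).re ≤ (n : ℝ) := by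
          calc (φ a⁺).re = (φ a).re := by rw [hpa]
            _ ≤ ‖φ a‖ := Complex.re_le_norm _
            _ ≤ ‖a‖ := hnorm
            _ ≤ n := hn
        rw [Complex.le_def]
        refine ⟨by simpa using hre, ?_⟩
        rw [Complex.le_def] at hp
        simp [← hp.2]
      calc φ a⁺ ≤ (n : ℂ) := hna
        _ = (n : ℂ) * 1 := by ring
        _ ≤ (n : ℂ) * φ b⁺ := by
            apply mul_le_mul_of_nonneg_left hb1' (by exact_mod_cast Nat.cast_nonneg (α := ℝ) n)
    · rw [← heq]
      exact mul_nonneg (by exact_mod_cast Nat.cast_nonneg (α := ℝ) n) hpb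
  rw [← hφ, map_sub, map_nsmul, nsmul_eq_mul]
  rw [sub_nonneg]
  exact key

/-- In a commutative unital C*-algebra, if `a ≤ a·b` for self-adjoint `a`, `b`, then
`a⁺ ≤ n • b⁺` for some natural number `n`; in fact any `n ≥ ‖a‖` works. -/
theorem posPart_le_nsmul_posPart_of_le_mul {A : Type*} [CommCStarAlgebra A]
    [PartialOrder A] [StarOrderedRing A]
    (a b : A) (ha : IsSelfAdjoint a) (hb : IsSelfAdjoint b) (h : a ≤ a * b) :
    (∃ n : ℕ, a⁺ ≤ n • b⁺) ∧ ∀ n : ℕ, ‖a‖ ≤ (n : ℝ) → a⁺ ≤ n • b⁺ := by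
  refine ⟨⟨⌈‖a‖⌉₊, aux_main a b ha hb h _ (Nat.le_ceil _)⟩,
    fun n hn ↦ aux_main a b ha hb h n hn⟩
end

section
/- Let A be a commutative unital C*-algebra equipped with an assignment a ↦ P(a) defined on self-adjoint elements such that each P(a) is a projection (P(a)* = P(a) = P(a)²), P(a)·a = a⁺, and P(a)·P(−a) = 0. Then for every self-adjoint a ∈ A and every real number r > 0: r • P(a − r·1) ≤ a⁺ and a⁺ ≤ ‖a‖ • P(a). -/
open CFC in
private lemma my_mul_nonneg {A : Type*} [CommCStarAlgebra A]
    [PartialOrder A] [StarOrderedRing A] {x y : A} (hx : 0 ≤ x) (hy : 0 ≤ y) :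
    0 ≤ x * y := by
  have hsx : sqrt x * sqrt x = x := sqrt_mul_sqrt_self x hx
  have hsy : sqrt y * sqrt y = y := sqrt_mul_sqrt_self y hy
  have hsa : IsSelfAdjoint (sqrt x * sqrt y) :=
    ((sqrt_nonneg (a := x)).isSelfAdjoint.mul
      (sqrt_nonneg (a := y)).isSelfAdjoint)
  calc (0 : A) ≤ star (sqrt x * sqrt y) * (sqrt x * sqrt y) := star_mul_self_nonneg _
    _ = x * y := by rw [hsa.star_eq, mul_mul_mul_comm, hsx, hsy]

/-- Let `A` be a commutative unital C*-algebra with an assignment `a ↦ P a` on self-adjoint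
elements such that `P a` is a projection, `P a · a = a⁺` and `P a · P (−a) = 0` (the spectral
projection `[a > 0]`). Then for self-adjoint `a` and real `r > 0` one has
`r • P (a − r·1) ≤ a⁺` and `a⁺ ≤ ‖a‖ • P a`. -/
theorem spectralProjection_regularity {A : Type*} [CommCStarAlgebra A]
    [PartialOrder A] [StarOrderedRing A]
    (P : A → A)
    (hproj : ∀ a : A, IsSelfAdjoint a → star (P a) = P a ∧ P a * P a = P a)
    (hpos : ∀ a : A, IsSelfAdjoint a → P a * a = a⁺)
    (horth : ∀ a : A, IsSelfAdjoint a → P a * P (-a) = 0)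
    (a : A) (ha : IsSelfAdjoint a) (r : ℝ) (hr : 0 < r) :
    r • P (a - r • (1 : A)) ≤ a⁺ ∧ a⁺ ≤ ‖a‖ • P a := by
  have ha_pn : a⁺ - a⁻ = a := CFC.posPart_sub_negPart a ha
  have hap : (0 : A) ≤ a⁺ := CFC.posPart_nonneg a
  have han : (0 : A) ≤ a⁻ := CFC.negPart_nonneg a
  -- P a is a projection, hence nonneg, and 1 - P a is nonneg
  have projNonneg : ∀ b : A, IsSelfAdjoint b → 0 ≤ P b := fun b hb => by
    have h := hproj b hb
    calc (0:A) ≤ star (P b) * P b := star_mul_self_nonneg _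
      _ = P b := by rw [h.1, h.2]
  have projCompl : ∀ b : A, IsSelfAdjoint b → 0 ≤ 1 - P b := fun b hb => by
    have h := hproj b hb
    have hs : star (1 - P b) = 1 - P b := by rw [star_sub, star_one, h.1]
    calc (0:A) ≤ star (1 - P b) * (1 - P b) := star_mul_self_nonneg _
      _ = 1 - P b := by rw [hs, sub_mul, one_mul, mul_sub, mul_one, h.2]; ring
  constructor
  · set b : A := a - r • (1 : A) with hb_def
    have hb : IsSelfAdjoint b := by
      rw [hb_def, IsSelfAdjoint, star_sub, star_smul, star_one, ha.star_eq, star_trivial]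
    have hbp : (0 : A) ≤ b⁺ := CFC.posPart_nonneg b
    have hPb := hpos b hb
    have key : P b * a = b⁺ + r • P b := by
      have : P b * b = P b * a - r • P b := by
        rw [hb_def]; rw [mul_sub, mul_smul_comm, mul_one]
      rw [this] at hPb
      linear_combination hPb
    rw [← sub_nonneg]
    have decomp : a⁺ - r • P b = (1 - P b) * a⁺ + P b * a⁻ + b⁺ := by
      have hPa : P b * a⁺ - P b * a⁻ = P b * a := by rw [← mul_sub, ha_pn]
      rw [← hPa] at key
      linear_combination key
    rw [decomp]
    have h1 : 0 ≤ (1 - P b) * a⁺ := my_mul_nonneg (projCompl b hb) hap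
    have h2 : 0 ≤ P b * a⁻ := my_mul_nonneg (projNonneg b hb) han
    positivity
  · rw [← sub_nonneg]
    have hPa := hpos a ha
    have hnorm : a ≤ algebraMap ℝ A ‖a‖ := ha.le_algebraMap_norm_self
    have halg : algebraMap ℝ A ‖a‖ = ‖a‖ • (1 : A) := Algebra.algebraMap_eq_smul_one _
    have decomp : ‖a‖ • P a - a⁺ = P a * (‖a‖ • (1:A) - a) := by
      rw [mul_sub, hPa, mul_smul_comm, mul_one]
    rw [decomp]
    exact my_mul_nonneg (projNonneg a ha) (by rw [← halg, sub_nonneg]; exact hnorm)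
end

section
/- Let A be a commutative unital C*-algebra, let a ∈ A with 0 ≤ a, and let p ∈ A be a projection such that a·p = 0 and b·p = b for every b ∈ A with a·b = 0. Then for every b ∈ A with 0 ≤ b: a·b = 0 if and only if there exists a natural number n with b ≤ n • p. (This exhibits D_p as the pseudocomplement of D_a in the lattice generating the Gelfand spectrum of a commutative Rickart C*-algebra.) -/
/-- In a commutative unital C*-algebra, if `p` is the Rickart projection generating the
annihilator of a positive element `a` (i.e. `a·p = 0` and `b·p = b` whenever `a·b = 0`), then
for every positive `b`: `a·b = 0` iff `b ≤ n • p` for some natural number `n`.  This exhibits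
`D_p` as the pseudocomplement of `D_a` in the lattice generating the Gelfand spectrum. -/
theorem rickart_annihilator_pseudocomplement {A : Type*} [CommCStarAlgebra A]
    [PartialOrder A] [StarOrderedRing A]
    (a p : A) (ha : 0 ≤ a) (hpstar : star p = p) (hpidem : p * p = p)
    (hap : a * p = 0) (hann : ∀ b : A, a * b = 0 → b * p = b)
    (b : A) (hb : 0 ≤ b) :
    a * b = 0 ↔ ∃ n : ℕ, b ≤ n • p := by
  constructor
  · intro hab
    have hbp : b * p = b := hann b hab
    obtain ⟨n, hn⟩ : ∃ n : ℕ, ‖b‖ ≤ n := exists_nat_ge ‖b‖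
    refine ⟨n, ?_⟩
    have hb1 : b ≤ (n : A) := by
      calc b ≤ algebraMap ℝ A ‖b‖ := IsSelfAdjoint.le_algebraMap_norm_self hb.isSelfAdjoint
        _ ≤ (n : A) := by
          rw [← map_natCast (algebraMap ℝ A), ← sub_nonneg, ← map_sub]
          have key := star_mul_self_nonneg (algebraMap ℝ A (Real.sqrt ((n : ℝ) - ‖b‖)))
          rwa [← algebraMap_star_comm, star_trivial, ← map_mul,
            Real.mul_self_sqrt (by linarith)] at key
    have := star_left_conjugate_le_conjugate hb1 p
    rw [hpstar] at this
    calc b = p * b * p := by rw [mul_comm p b, mul_assoc, hpidem, hbp]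
      _ ≤ p * (n : A) * p := this
      _ = n • p := by rw [mul_comm p (n : A), mul_assoc, hpidem]; simp [nsmul_eq_mul]
  · rintro ⟨n, hbn⟩
    set s := CFC.sqrt a with hs
    have hss : s * s = a := CFC.sqrt_mul_sqrt_self a ha
    have hsstar : star s = s := (CFC.sqrt_nonneg (a := a)).isSelfAdjoint.star_eq
    have h1 : s * b * s ≤ s * (n • p) * s := by
      have := star_left_conjugate_le_conjugate hbn s
      rwa [hsstar] at this
    have h2 : s * (n • p) * s = 0 := by
      rw [mul_smul_comm, smul_mul_assoc, mul_comm s p, mul_assoc, hss, mul_comm p a, hap,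
        smul_zero]
    have h3 : 0 ≤ s * b * s := by
      have := star_left_conjugate_nonneg hb s
      rwa [hsstar] at this
    have h4 : s * b * s = 0 := le_antisymm (h2 ▸ h1) h3
    calc a * b = s * b * s := by rw [mul_comm s b, mul_assoc, hss, mul_comm]
      _ = 0 := h4
end

section
/- Let A be a nontrivial commutative unital C*-algebra that is Rickart, i.e. for every x ∈ A there exists a projection p ∈ A such that for all y ∈ A: x·y = 0 if and only if p·y = y. Let Proj(A) = {p ∈ A | p* = p = p²}, partially ordered by p ≤ q iff p·q = p. Then there is an order isomorphism between the lattice of open subsets of the Gelfand spectrum of A (the character space of A, i.e. the space of nonzero unital ⋆-algebra homomorphisms A → ℂ with the weak-* topology) ordered by inclusion, and the set of ideals of Proj(A) (nonempty, downward-closed, upward-directed subsets of Proj(A)) ordered by inclusion. -/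
/-! A projection `p` has a clopen support `{φ | φ p ≠ 0}` in the character space, and `p ≤ q`
exactly when the support of `p` lies in that of `q`. An open set goes to the projections
supported in it, an ideal to the union of the supports of its members. An ideal is recovered
from that union because supports are compact and ideals are directed. An open set `U` is
recovered through the Rickart property: for `φ ∈ U`, Urysohn's lemma and Gelfand duality give
`a * b = 0` with `φ b ≠ 0` and `a` nowhere zero off `U`; the projection `p` attached to `a`
satisfies `a * p = 0` and `p * b = b`, so its support contains `φ` and lies in `U`. -/

/-- An ideal of the projection lattice `Proj(A)` (projections ordered by `p ≤ q ↔ p·q = p`):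
a nonempty, downward-closed, upward-directed set of projections. -/
def IsProjIdeal {A : Type*} [CStarAlgebra A]
    (S : Set {p : A // star p = p ∧ p * p = p}) : Prop :=
  S.Nonempty ∧
  (∀ p q : {p : A // star p = p ∧ p * p = p}, (p : A) * (q : A) = (p : A) → q ∈ S → p ∈ S) ∧
  (∀ p ∈ S, ∀ q ∈ S, ∃ r ∈ S,
      (p : A) * (r : A) = (p : A) ∧ (q : A) * (r : A) = (q : A))

open WeakDual TopologicalSpace Set

theorem ContinuousMap.exists_mul_eq_zero_of_mem_isOpen {X : Type*} [TopologicalSpace X]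
    [NormalSpace X] [T1Space X] {U : Set X} (hU : IsOpen U) {x : X}
    (hx : x ∈ U) : ∃ f g : C(X, ℂ), f * g = 0 ∧ g x ≠ 0 ∧ ∀ y ∉ U, f y ≠ 0 := by
  obtain ⟨u, hux, huU, -⟩ := exists_continuous_zero_one_of_isClosed isClosed_singleton
    hU.isClosed_compl (disjoint_singleton_left.mpr (not_not.mpr hx))
  refine ⟨⟨fun y => ((max (u y - 1 / 2) 0 : ℝ) : ℂ), by fun_prop⟩,
    ⟨fun y => ((max (1 / 2 - u y) 0 : ℝ) : ℂ), by fun_prop⟩, ?_, ?_, fun y hy => ?_⟩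
  · ext y
    simpa using le_total (u y) 2⁻¹
  · simp [hux rfl]
  · norm_num [huU hy]

def IsRickart (A : Type*) [Mul A] [Zero A] [Star A] : Prop :=
  ∀ x : A, ∃ p : A, (star p = p ∧ p * p = p) ∧ ∀ y : A, x * y = 0 ↔ p * y = y

namespace ProjIdeal

variable {A : Type*} [CommCStarAlgebra A]

abbrev Proj (A : Type*) [Mul A] [Star A] := {p : A // star p = p ∧ p * p = p}

theorem ext_characterSpace {a b : A} (h : ∀ φ : characterSpace ℂ A, φ a = φ b) : a = b :=
  (gelfandTransform_isometry A).injective <| ContinuousMap.ext h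

theorem exists_mul_eq_zero_of_mem_isOpen {U : Set (characterSpace ℂ A)} (hU : IsOpen U)
    {φ : characterSpace ℂ A} (hφ : φ ∈ U) :
    ∃ a b : A, a * b = 0 ∧ φ b ≠ 0 ∧ ∀ ψ ∉ U, ψ a ≠ 0 := by
  obtain ⟨f, g, hfg, hg, hf⟩ := ContinuousMap.exists_mul_eq_zero_of_mem_isOpen hU hφ
  obtain ⟨a, rfl⟩ := (gelfandTransform_bijective A).surjective f
  obtain ⟨b, rfl⟩ := (gelfandTransform_bijective A).surjective g
  exact ⟨a, b, (gelfandTransform_bijective A).injective (by simpa using hfg), hg, hf⟩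

def support (p : Proj A) : Set (characterSpace ℂ A) := {φ | φ (p : A) ≠ 0}

theorem apply_eq_zero_or_one (p : Proj A) (φ : characterSpace ℂ A) :
    φ (p : A) = 0 ∨ φ (p : A) = 1 :=
  IsIdempotentElem.iff_eq_zero_or_one.mp <| by
    rw [IsIdempotentElem, ← map_mul, p.2.2]

theorem isClopen_support (p : Proj A) : IsClopen (support p) := by
  have hsupport : support p = gelfandTransform ℂ A p ⁻¹' {1} := by
    ext φ
    rcases apply_eq_zero_or_one p φ with h | h <;> simp [support, h]
  constructor
  · exact hsupport ▸ isClosed_singleton.preimage (map_continuous _)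
  · exact isClosed_singleton.preimage (map_continuous (gelfandTransform ℂ A p)) |>.isOpen_compl

theorem support_subset_support_iff {p q : Proj A} :
    support p ⊆ support q ↔ (p : A) * q = p := by
  constructor
  · intro h
    refine ext_characterSpace fun φ => ?_
    rw [map_mul]
    rcases apply_eq_zero_or_one p φ with hp | hp
    · rw [hp, zero_mul]
    · have hq := (apply_eq_zero_or_one q φ).resolve_left (h (by simp [support, hp]))
      rw [hq, mul_one]
  · intro h φ hφ hq
    exact hφ (by rw [← h, map_mul, hq, mul_zero])

theorem exists_support_eq_union (p q : Proj A) :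
    ∃ r : Proj A, support r = support p ∪ support q := by
  obtain ⟨p, hps, hpp⟩ := p
  obtain ⟨q, hqs, hqq⟩ := q
  refine ⟨⟨p + q - p * q, ?_, ?_⟩, ?_⟩
  · rw [star_sub, star_add, star_mul, hps, hqs, mul_comm]
  · linear_combination (1 - 2 * q + q * q) * hpp + (1 - p) * hqq
  · ext φ
    rcases apply_eq_zero_or_one ⟨p, hps, hpp⟩ φ with hφp | hφp <;>
    rcases apply_eq_zero_or_one ⟨q, hqs, hqq⟩ φ with hφq | hφq <;>
    simp_all [support]

theorem exists_support_subset_of_mem_isOpen (hA : IsRickart A) {U : Set (characterSpace ℂ A)}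
    (hU : IsOpen U) {φ : characterSpace ℂ A} (hφ : φ ∈ U) :
    ∃ p : Proj A, φ ∈ support p ∧ support p ⊆ U := by
  obtain ⟨a, b, hab, hb, ha⟩ := exists_mul_eq_zero_of_mem_isOpen hU hφ
  obtain ⟨p, hp, hann⟩ := hA a
  have hap : a * p = 0 := (hann p).mpr hp.2
  have hpb : p * b = b := (hann b).mp hab
  refine ⟨⟨p, hp⟩, fun hφp => hb ?_, fun ψ hψp => ?_⟩
  · rw [← hpb, map_mul, hφp, zero_mul]
  · by_contra hψU
    exact ha ψ hψU <| (mul_eq_zero.mp (by rw [← map_mul, hap, map_zero])).resolve_right hψp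

def idealOf (U : Set (characterSpace ℂ A)) : Set (Proj A) := {p | support p ⊆ U}

def openOf (S : Set (Proj A)) : Set (characterSpace ℂ A) := ⋃ p ∈ S, support p

theorem isProjIdeal_idealOf (U : Set (characterSpace ℂ A)) : IsProjIdeal (idealOf U) := by
  refine ⟨⟨⟨0, by simp⟩, fun φ hφ => by simp [support] at hφ⟩,
    fun p q hpq hq => (support_subset_support_iff.mpr hpq).trans hq, fun p hp q hq => ?_⟩
  obtain ⟨r, hr⟩ := exists_support_eq_union p q
  exact ⟨r, hr.subset.trans (union_subset hp hq),
    support_subset_support_iff.mp (subset_union_left.trans hr.symm.subset),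
    support_subset_support_iff.mp (subset_union_right.trans hr.symm.subset)⟩

theorem isOpen_openOf (S : Set (Proj A)) : IsOpen (openOf S) :=
  isOpen_biUnion fun p _ => (isClopen_support p).isOpen

theorem openOf_idealOf (hA : IsRickart A) {U : Set (characterSpace ℂ A)} (hU : IsOpen U) :
    openOf (idealOf U) = U := by
  refine Subset.antisymm (iUnion₂_subset fun p hp => hp) fun φ hφ => ?_
  obtain ⟨p, hφp, hpU⟩ := exists_support_subset_of_mem_isOpen hA hU hφ
  exact mem_biUnion hpU hφp

theorem idealOf_openOf {S : Set (Proj A)} (hS : IsProjIdeal S) : idealOf (openOf S) = S := by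
  obtain ⟨⟨p₀, hp₀⟩, hdown, hdir⟩ := hS
  refine Subset.antisymm (fun p hp => ?_) fun p hp => subset_biUnion_of_mem hp
  have : Nonempty S := ⟨⟨p₀, hp₀⟩⟩
  obtain ⟨⟨r, hr⟩, hpr⟩ := (isClopen_support p).isClosed.isCompact.elim_directed_cover
    (fun q : S => support q.1) (fun q => (isClopen_support _).isOpen)
    (by rwa [openOf, biUnion_eq_iUnion] at hp)
    fun q q' => by
      obtain ⟨r, hr, hqr, hq'r⟩ := hdir q q.2 q' q'.2
      exact ⟨⟨r, hr⟩, support_subset_support_iff.mpr hqr,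
        support_subset_support_iff.mpr hq'r⟩
  exact hdown p r (support_subset_support_iff.mp hpr) hr

end ProjIdeal

open ProjIdeal in
theorem gelfandSpectrum_opens_orderIso_projIdeals_general {A : Type*} [CommCStarAlgebra A]
    (hRickart : ∀ x : A, ∃ p : A, (star p = p ∧ p * p = p) ∧ ∀ y : A, x * y = 0 ↔ p * y = y) :
    Nonempty (TopologicalSpace.Opens (WeakDual.characterSpace ℂ A) ≃o
      {S : Set {p : A // star p = p ∧ p * p = p} // IsProjIdeal S}) :=
  ⟨Equiv.toOrderIso
    { toFun := fun U => ⟨idealOf U, isProjIdeal_idealOf (A := A) U⟩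
      invFun := fun S => ⟨openOf S.1, isOpen_openOf S.1⟩
      left_inv := fun U => Opens.ext (openOf_idealOf hRickart U.isOpen)
      right_inv := fun S => Subtype.ext (idealOf_openOf S.2) }
    (fun _ U hUV _ (hp : support _ ⊆ _) => show support _ ⊆ U from hp.trans hUV)
    (fun _ _ hST => biUnion_subset_biUnion_left hST)⟩

/-- For a nontrivial commutative Rickart C*-algebra `A`, the frame of open subsets of the
Gelfand spectrum (character space) of `A` is order isomorphic to the set of ideals of the
projection lattice `Proj(A)`, both ordered by inclusion. -/
theorem gelfandSpectrum_opens_orderIso_projIdeals {A : Type*} [CommCStarAlgebra A]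
    [Nontrivial A]
    (hRickart : ∀ x : A, ∃ p : A, (star p = p ∧ p * p = p) ∧ ∀ y : A, x * y = 0 ↔ p * y = y) :
    Nonempty (TopologicalSpace.Opens (WeakDual.characterSpace ℂ A) ≃o
      {S : Set {p : A // star p = p ∧ p * p = p} // IsProjIdeal S}) :=
  gelfandSpectrum_opens_orderIso_projIdeals_general hRickart
end

section
/- Let X be a compact Hausdorff topological space and let a, b ∈ C(X, ℝ) be continuous real-valued functions. Then the following are equivalent: (1) there exists c ∈ C(X, ℝ) such that {x | 0 < c(x)} ∪ {x | 0 < a(x)} = X and {x | 0 < c(x)} ∩ {x | 0 < b(x)} = ∅; (2) there exists a rational number q > 0 such that {x | 0 < b(x)} ⊆ {x | q < a(x)}. -/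
/-- The well-inside lemma, classically: for continuous `a b : C(X, ℝ)` on a compact Hausdorff
space `X`, there is a cozero set complementing `{0 < a}` and disjoint from `{0 < b}` iff
`{0 < b} ⊆ {q < a}` for some rational `q > 0`. -/
theorem wellInside_iff_rat_lt {X : Type*} [TopologicalSpace X] [CompactSpace X] [T2Space X]
    (a b : C(X, ℝ)) :
    (∃ c : C(X, ℝ), {x | 0 < c x} ∪ {x | 0 < a x} = Set.univ ∧
        {x | 0 < c x} ∩ {x | 0 < b x} = ∅) ↔
    (∃ q : ℚ, 0 < q ∧ {x | 0 < b x} ⊆ {x | (q : ℝ) < a x}) := by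
  constructor
  · rintro ⟨c, hu, hi⟩
    set K : Set X := {x | c x ≤ 0} with hKdef
    have hKclosed : IsClosed K := isClosed_le c.continuous continuous_const
    have hKcompact : IsCompact K := hKclosed.isCompact
    have hbK : {x | 0 < b x} ⊆ K := by
      intro x hx
      by_contra h
      have hc : 0 < c x := by simpa [hKdef] using h
      have : x ∈ ({x | 0 < c x} ∩ {x | 0 < b x} : Set X) := ⟨hc, hx⟩
      rw [hi] at this
      exact this
    have hKa : ∀ x ∈ K, 0 < a x := by
      intro x hx
      rcases (Set.eq_univ_iff_forall.mp hu x) with h | h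
      · exact absurd (Set.mem_setOf_eq ▸ h) (not_lt.mpr hx)
      · exact h
    rcases K.eq_empty_or_nonempty with hK | hK
    · refine ⟨1, one_pos, fun x hx => absurd (hbK hx) (by simp [hK])⟩
    · obtain ⟨x₀, hx₀, hmin⟩ := hKcompact.exists_isMinOn hK a.continuous.continuousOn
      obtain ⟨q, hq0, hq⟩ := exists_rat_btwn (hKa x₀ hx₀)
      refine ⟨q, by exact_mod_cast hq0, fun x hx => lt_of_lt_of_le hq (hmin (hbK hx))⟩
  · rintro ⟨q, hq, hsub⟩
    refine ⟨ContinuousMap.const X (q : ℝ) - a, ?_, ?_⟩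
    · ext x
      simp only [Set.mem_union, Set.mem_setOf_eq, Set.mem_univ, iff_true,
        ContinuousMap.sub_apply, ContinuousMap.const_apply]
      by_cases h : 0 < a x
      · exact Or.inr h
      · left
        have : (0 : ℝ) < q := by exact_mod_cast hq
        push_neg at h
        linarith
    · ext x
      simp only [Set.mem_inter_iff, Set.mem_setOf_eq, Set.mem_empty_iff_false, iff_false,
        ContinuousMap.sub_apply, ContinuousMap.const_apply]
      rintro ⟨h1, h2⟩
      have := hsub h2
      simp only [Set.mem_setOf_eq] at this
      linarith
end

section
/- Let X be a compact Hausdorff topological space. Call a subset U ⊆ X a cozero set if U = {x | 0 < f(x)} for some f ∈ C(X, ℝ). For cozero sets U, V, say U is well inside V (written U ⋐ V) if there exists a cozero set W with W ∪ V = X and W ∩ U = ∅. Call a collection S of cozero sets a regular ideal if: ∅ ∈ S; U ∈ S whenever U is a cozero set with U ⊆ V for some V ∈ S; U ∪ V ∈ S whenever U, V ∈ S; and for every cozero set V, if every cozero set U with U ⋐ V belongs to S, then V ∈ S. Then the map S ↦ ⋃S (union of the members of S) is a bijection from the set of regular ideals of the cozero sets of X onto the topology of X, and this bijection is an order isomorphism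 with respect to inclusion on both sides. -/
/-- A cozero set of a topological space `X`. -/
def IsCozero {X : Type*} [TopologicalSpace X] (U : Set X) : Prop :=
  ∃ f : C(X, ℝ), U = {x | 0 < f x}

/-- `U` is well inside `V`: some cozero set `W` satisfies `W ∪ V = X` and `W ∩ U = ∅`. -/
def WellInside {X : Type*} [TopologicalSpace X] (U V : Set X) : Prop :=
  ∃ W : Set X, IsCozero W ∧ W ∪ V = Set.univ ∧ W ∩ U = ∅

/-- A regular ideal of cozero sets: a collection of cozero sets containing `∅`, downward
closed among cozero sets, closed under binary unions, and containing every cozero set all of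
whose well-inside approximations it contains. -/
def IsRegularCozeroIdeal {X : Type*} [TopologicalSpace X] (S : Set (Set X)) : Prop :=
  (∀ U ∈ S, IsCozero U) ∧
  (∅ : Set X) ∈ S ∧
  (∀ U V : Set X, IsCozero U → U ⊆ V → V ∈ S → U ∈ S) ∧
  (∀ U ∈ S, ∀ V ∈ S, U ∪ V ∈ S) ∧
  (∀ V : Set X, IsCozero V → (∀ U : Set X, IsCozero U → WellInside U V → U ∈ S) → V ∈ S)

/-!
A regular ideal is determined by its union: if `V` is a cozero set contained in `⋃₀ S`, then
every `U ⋐ V` has compact closure inside `⋃₀ S`, hence lies in a finite union of members of `S`,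
so `U ∈ S` and regularity gives `V ∈ S`. Thus `S` consists of all cozero sets inside `⋃₀ S`.
Conversely, for any set `U` the cozero sets inside `U` form a regular ideal, because a cozero set
`{f > 0}` is the union of the sets `{f > c}`, `c > 0`, each well inside it; by complete
regularity its union is `U` when `U` is open.
-/

section CozeroSets

variable {X : Type*} [TopologicalSpace X]

lemma IsCozero.isOpen {U : Set X} (h : IsCozero U) : IsOpen U := by
  obtain ⟨f, rfl⟩ := h
  exact isOpen_lt continuous_const f.continuous

lemma isCozero_empty : IsCozero (∅ : Set X) :=
  ⟨0, by ext; simp⟩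

lemma IsCozero.union {U V : Set X} (hU : IsCozero U) (hV : IsCozero V) :
    IsCozero (U ∪ V) := by
  obtain ⟨f, rfl⟩ := hU
  obtain ⟨g, rfl⟩ := hV
  exact ⟨f ⊔ g, by ext; simp⟩

lemma isCozero_setOf_lt (f : C(X, ℝ)) (c : ℝ) : IsCozero {x | c < f x} :=
  ⟨f - ContinuousMap.const X c, by ext; simp⟩

lemma isCozero_setOf_gt (f : C(X, ℝ)) (c : ℝ) : IsCozero {x | f x < c} :=
  ⟨ContinuousMap.const X c - f, by ext; simp⟩

lemma WellInside.closure_subset {U V : Set X} (h : WellInside U V) : closure U ⊆ V := by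
  obtain ⟨W, hW, hWV, hWU⟩ := h
  have hUW : closure U ⊆ Wᶜ :=
    closure_minimal (Set.disjoint_iff_inter_eq_empty.mpr hWU).subset_compl_left
      hW.isOpen.isClosed_compl
  intro x hx
  exact (Set.eq_univ_iff_forall.mp hWV x).resolve_left (hUW hx)

lemma wellInside_setOf_lt (f : C(X, ℝ)) {c : ℝ} (hc : 0 < c) :
    WellInside {x | c < f x} {x | 0 < f x} := by
  refine ⟨{x | f x < c}, isCozero_setOf_gt f c, ?_, ?_⟩
  · ext x
    simp only [Set.mem_union, Set.mem_ofPred_eq, Set.mem_univ, iff_true]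
    by_contra! h
    linarith [h.1, h.2]
  · ext x
    simp only [Set.mem_inter_iff, Set.mem_ofPred_eq, Set.mem_empty_iff_false, iff_false, not_and]
    exact fun h => h.not_gt

def cozeroSetsIn (U : Set X) : Set (Set X) := {V | IsCozero V ∧ V ⊆ U}

lemma cozeroSetsIn_mono {U U' : Set X} (h : U ⊆ U') : cozeroSetsIn U ⊆ cozeroSetsIn U' :=
  fun _ hV => ⟨hV.1, hV.2.trans h⟩

lemma isRegularCozeroIdeal_cozeroSetsIn (U : Set X) :
    IsRegularCozeroIdeal (cozeroSetsIn U) := by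
  refine ⟨fun V hV => hV.1, ⟨isCozero_empty, Set.empty_subset U⟩,
    fun A B hA hAB hB => ⟨hA, hAB.trans hB.2⟩,
    fun A hA B hB => ⟨hA.1.union hB.1, Set.union_subset hA.2 hB.2⟩, ?_⟩
  rintro V ⟨f, rfl⟩ hreg
  refine ⟨⟨f, rfl⟩, fun x hx => ?_⟩
  have hx' : 0 < f x := hx
  have hhalf := hreg _ (isCozero_setOf_lt f (f x / 2)) (wellInside_setOf_lt f (half_pos hx'))
  exact hhalf.2 (show f x / 2 < f x by linarith)

lemma sUnion_cozeroSetsIn [CompletelyRegularSpace X] {U : Set X} (hU : IsOpen U) :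
    ⋃₀ cozeroSetsIn U = U := by
  refine (Set.sUnion_subset fun V hV => hV.2).antisymm fun x hx => ?_
  obtain ⟨f, hf, hfx, hfU⟩ := CompletelyRegularSpace.completely_regular_isOpen x U hU hx
  let g : C(X, ℝ) := ContinuousMap.const X 1 - ⟨fun y => (f y : ℝ), by fun_prop⟩
  refine ⟨{y | 0 < g y}, ⟨⟨g, rfl⟩, fun y hy => ?_⟩, by simp [g, hfx]⟩
  by_contra hyU
  simp [g, hfU hyU] at hy

end CozeroSets

namespace IsRegularCozeroIdeal

variable {X : Type*} [TopologicalSpace X] {S : Set (Set X)}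

lemma sUnion_mem_of_finite (hS : IsRegularCozeroIdeal S) {t : Set (Set X)} (htf : t.Finite)
    (htS : t ⊆ S) : ⋃₀ t ∈ S := by
  induction t, htf using Set.Finite.induction_on with
  | empty => simpa using hS.2.1
  | @insert a s _ _ ih =>
    rw [Set.sUnion_insert]
    exact hS.2.2.2.1 a (htS (Set.mem_insert a s)) _ (ih ((Set.subset_insert a s).trans htS))

lemma mem_of_closure_subset_sUnion [CompactSpace X] (hS : IsRegularCozeroIdeal S)
    {U : Set X} (hU : IsCozero U) (h : closure U ⊆ ⋃₀ S) : U ∈ S := by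
  rw [Set.sUnion_eq_biUnion] at h
  obtain ⟨t, htS, htf, hcover⟩ := isClosed_closure.isCompact.elim_finite_subcover_image
    (fun W hW => (hS.1 W hW).isOpen) h
  refine hS.2.2.1 U _ hU ?_ (hS.sUnion_mem_of_finite htf htS)
  rw [Set.sUnion_eq_biUnion]
  exact subset_closure.trans hcover

lemma eq_cozeroSetsIn_sUnion [CompactSpace X] (hS : IsRegularCozeroIdeal S) :
    S = cozeroSetsIn (⋃₀ S) := by
  refine Set.Subset.antisymm (fun V hV => ⟨hS.1 V hV, Set.subset_sUnion_of_mem hV⟩) ?_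
  rintro V ⟨hV, hVS⟩
  exact hS.2.2.2.2 V hV fun U hU hUV =>
    hS.mem_of_closure_subset_sUnion hU (hUV.closure_subset.trans hVS)

end IsRegularCozeroIdeal

/-- For a compact Hausdorff space `X`, the map `S ↦ ⋃S` is an order isomorphism from the
regular ideals of cozero sets of `X` onto the topology of `X`. -/
theorem regularCozeroIdeals_orderIso_topology {X : Type*} [TopologicalSpace X]
    [CompactSpace X] [T2Space X] :
    (∀ S : Set (Set X), IsRegularCozeroIdeal S → IsOpen (⋃₀ S)) ∧
    (∀ U : Set X, IsOpen U → ∃! S : Set (Set X), IsRegularCozeroIdeal S ∧ ⋃₀ S = U) ∧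
    (∀ S T : Set (Set X), IsRegularCozeroIdeal S → IsRegularCozeroIdeal T →
        (S ⊆ T ↔ ⋃₀ S ⊆ ⋃₀ T)) := by
  refine ⟨fun S hS => isOpen_sUnion fun V hV => (hS.1 V hV).isOpen, fun U hU => ?_,
    fun S T hS hT => ⟨Set.sUnion_subset_sUnion, fun h => ?_⟩⟩
  · refine ⟨cozeroSetsIn U, ⟨isRegularCozeroIdeal_cozeroSetsIn U, sUnion_cozeroSetsIn hU⟩, ?_⟩
    rintro T ⟨hT, rfl⟩
    exact hT.eq_cozeroSetsIn_sUnion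
  · rw [hS.eq_cozeroSetsIn_sUnion, hT.eq_cozeroSetsIn_sUnion]
    exact cozeroSetsIn_mono h
end

section
/- Let X be a compact Hausdorff topological space, f ∈ C(X, ℝ), and let 𝒰 be a collection of open subsets of X. Then {x | 0 < f(x)} ⊆ ⋃𝒰 if and only if for every rational q > 0 there exists a finite subcollection 𝒰₀ ⊆ 𝒰 with {x | q < f(x)} ⊆ ⋃𝒰₀. -/
/-- The covering relation, classically: for `f : C(X, ℝ)` on a compact Hausdorff space and a
collection `𝒰` of open sets, `{0 < f} ⊆ ⋃𝒰` iff for every rational `q > 0` some finite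
subcollection of `𝒰` covers `{q < f}`. -/
theorem cozero_subset_iff_finite_subcover {X : Type*} [TopologicalSpace X] [CompactSpace X]
    [T2Space X] (f : C(X, ℝ)) (𝒰 : Set (Set X)) (h𝒰 : ∀ U ∈ 𝒰, IsOpen U) :
    {x | 0 < f x} ⊆ ⋃₀ 𝒰 ↔
      ∀ q : ℚ, 0 < q → ∃ 𝒰₀ ⊆ 𝒰, 𝒰₀.Finite ∧ {x | (q : ℝ) < f x} ⊆ ⋃₀ 𝒰₀ := by
  constructor
  · intro h q hq
    have hK : IsCompact {x | (q : ℝ) ≤ f x} := by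
      apply IsClosed.isCompact
      exact isClosed_le continuous_const f.continuous
    have hcov : {x | (q : ℝ) ≤ f x} ⊆ ⋃ U ∈ 𝒰, U := by
      intro x hx
      have : 0 < f x := lt_of_lt_of_le (by exact_mod_cast hq) hx
      simpa [Set.sUnion_eq_biUnion] using h this
    obtain ⟨𝒰₀, h𝒰₀, hfin, hsub⟩ := hK.elim_finite_subcover_image
      (fun U hU => h𝒰 U hU) hcov
    exact ⟨𝒰₀, h𝒰₀, hfin, fun x hx => by
      simpa [Set.sUnion_eq_biUnion] using hsub (show (q:ℝ) ≤ f x from le_of_lt hx)⟩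
  · intro h x hx
    obtain ⟨q, hq0, hqx⟩ := exists_rat_btwn (show (0:ℝ) < f x from hx)
    obtain ⟨𝒰₀, h𝒰₀, _, hsub⟩ := h q (by exact_mod_cast hq0)
    exact Set.sUnion_mono h𝒰₀ (hsub hqx)
end
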